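/- arXiv:1710.07007 — 5 statements merged into one kernel-verified Lean document; each statement's English description precedes it below -/
import Mathlib

section
/- If n is a positive integer with n not congruent to 1 modulo 4, then there is no Baxter permutation of length n that is fixed under quarter-turn (90°) rotation of its permutation matrix. -/
/-- The entry of the word `l` at (1-indexed) position `i`, i.e. `w(i)`. -/
def entry (l : List ℕ) (i : ℕ) : ℕ := l.getD (i - 1) 0

/-- `l` is the one-line notation of a permutation of `{1,…,n}`. -/
def IsPermWord (n : ℕ) (l : List ℕ) : Prop := l.Perm (List.range' 1 n)

/-- `l` is a Baxter permutation of length `n`: a permutation of `{1,…,n}`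
avoiding the vincular patterns 3-14-2 and 2-41-3. -/
def IsBaxter (n : ℕ) (l : List ℕ) : Prop :=
  IsPermWord n l ∧
  (¬ ∃ i j k, 1 ≤ i ∧ i < j ∧ j + 1 < k ∧ k ≤ n ∧
      entry l j < entry l k ∧ entry l k < entry l i ∧ entry l i < entry l (j + 1)) ∧
  (¬ ∃ i j k, 1 ≤ i ∧ i < j ∧ j + 1 < k ∧ k ≤ n ∧
      entry l (j + 1) < entry l i ∧ entry l i < entry l k ∧ entry l k < entry l j)

/-- `l` is fixed under quarter-turn (90°) rotation of its permutation matrix: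
`w(w(i)) = n+1-i` for all `i ∈ {1,…,n}`. -/
def QuarterFixed (n : ℕ) (l : List ℕ) : Prop :=
  ∀ i, 1 ≤ i → i ≤ n → entry l (entry l i) = n + 1 - i

/-- `l` is fixed under half-turn (180°) rotation of its permutation matrix:
`w(n+1-i) = n+1-w(i)` for all `i ∈ {1,…,n}`. -/
def HalfFixed (n : ℕ) (l : List ℕ) : Prop :=
  ∀ i, 1 ≤ i → i ≤ n → entry l (n + 1 - i) = n + 1 - entry l i

/-- The entry at position `i` is a left-to-right maximum. -/
def LRMaxAt (l : List ℕ) (i : ℕ) : Prop := ∀ k, 1 ≤ k → k < i → entry l k < entry l i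

/-- The entry at position `i` is a right-to-left maximum. -/
def RLMaxAt (n : ℕ) (l : List ℕ) (i : ℕ) : Prop := ∀ k, i < k → k ≤ n → entry l k < entry l i

/-- The entry at position `i` is a left-to-right minimum. -/
def LRMinAt (l : List ℕ) (i : ℕ) : Prop := ∀ k, 1 ≤ k → k < i → entry l i < entry l k

/-- The entry at position `i` is a right-to-left minimum. -/
def RLMinAt (n : ℕ) (l : List ℕ) (i : ℕ) : Prop := ∀ k, i < k → k ≤ n → entry l i < entry l k

/-- The (1-indexed) position of the value `v` in `l`, i.e. `w⁻¹(v)`. -/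
def pos (l : List ℕ) (v : ℕ) : ℕ := l.idxOf v + 1

/-- The one-line notation of the inverse of the permutation `l` of `{1,…,n}`. -/
def invWord (n : ℕ) (l : List ℕ) : List ℕ := (List.range' 1 n).map (pos l)

/-- The number of descents of a permutation word of length `n`:
indices `i ∈ {1,…,n-1}` with `w(i) > w(i+1)`. -/
noncomputable def des (n : ℕ) (l : List ℕ) : ℕ :=
  {i : ℕ | 1 ≤ i ∧ i + 1 ≤ n ∧ entry l (i + 1) < entry l i}.ncard

/-- Insert a new largest label `n+1` at (1-indexed) position `p`
in the permutation `l` of `{1,…,n}`. -/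
def insertMax (n p : ℕ) (l : List ℕ) : List ℕ := l.insertIdx (p - 1) (n + 1)

/-- Insert a new smallest label `1` at (1-indexed) position `p`
(all old labels get increased by 1). -/
def insertMin (p : ℕ) (l : List ℕ) : List ℕ := (l.map (· + 1)).insertIdx (p - 1) 1

/-- Append the value `j` at the end of the permutation `l`
(old labels `≥ j` get increased by 1). -/
def appendEnd (j : ℕ) (l : List ℕ) : List ℕ :=
  (l.map (fun x => if x < j then x else x + 1)) ++ [j]

/-- Standardize a word with distinct entries: replace the entries by `1,…,m` preserving
relative order (each entry is replaced by the number of entries less than or equal to it). -/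
def standardize (l : List ℕ) : List ℕ := l.map (fun x => (l.filter (fun y => y ≤ x)).length)

/-
Write `w` for the permutation. Applying `w(w(i)) = n+1-i` twice shows that `w`
commutes with the reflection `i ↦ n+1-i`. If `n = 2m` is even, the middle pair `w(m), w(m+1)` sums
to `n+1`, and together with `w(w(m)) = m+1`, `w(w(m+1)) = m` it spells out an occurrence of
3-14-2 (if `w(m) < w(m+1)`) or of 2-41-3 (otherwise). If `n = 2t+1` is odd, then `w(t+1) = t+1`, and
`i ↦ min (w(i), n+1-w(i))` is a fixed-point-free involution of `{1,…,t}`, so `t` is even and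
`n ≡ 1 (mod 4)`.
-/

theorem Finset.even_card_of_involution {ι : Type*} {s : Finset ι} (g : ι → ι)
    (hg_mem : ∀ a ∈ s, g a ∈ s) (hg_invol : ∀ a ∈ s, g (g a) = a) (hg_ne : ∀ a ∈ s, g a ≠ a) :
    Even s.card := by
  rw [← ZMod.natCast_eq_zero_iff_even, Finset.card_eq_sum_ones, Nat.cast_sum, Nat.cast_one]
  exact Finset.sum_involution (fun a _ => g a) (fun _ _ => by decide) (fun a ha _ => hg_ne a ha)
    hg_mem hg_invol

section

variable {n : ℕ} {l : List ℕ}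

theorem IsPermWord.entry_mem (hp : IsPermWord n l) {i : ℕ} (h1 : 1 ≤ i) (h2 : i ≤ n) :
    1 ≤ entry l i ∧ entry l i ≤ n := by
  have hlen : l.length = n := by simpa using hp.length_eq
  have hmem : l.getD (i - 1) 0 ∈ l := by
    rw [List.getD_eq_getElem l 0 (by omega)]
    exact List.getElem_mem _
  have := List.mem_range'_1.1 (hp.mem_iff.1 hmem)
  unfold entry
  omega

theorem QuarterFixed.halfFixed (hq : QuarterFixed n l) (hp : IsPermWord n l) : HalfFixed n l := by
  intro i h1 h2
  obtain ⟨e1, e2⟩ := hp.entry_mem h1 h2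
  simpa [hq i h1 h2] using hq (entry l i) e1 e2

theorem QuarterFixed.not_isBaxter_of_even (hq : QuarterFixed n l) (hn : 0 < n) (he : Even n) :
    ¬ IsBaxter n l := by
  rintro ⟨hp, h3142, h2413⟩
  obtain ⟨m, rfl⟩ := he
  obtain ⟨a1, an⟩ := hp.entry_mem (i := m) (by omega) (by omega)
  obtain ⟨b1, bn⟩ := hp.entry_mem (i := m + 1) (by omega) (by omega)
  have hwa := hq m (by omega) (by omega)
  have hwb := hq (m + 1) (by omega) (by omega)
  have hsum : entry l (m + 1) = m + m + 1 - entry l m := by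
    simpa [show m + m + 1 - m = m + 1 by omega] using hq.halfFixed hp m (by omega) (by omega)
  have ha_ne : entry l m ≠ m := fun h => by rw [h] at hwa; omega
  have hb_ne : entry l (m + 1) ≠ m := fun h => by rw [h] at hwb; omega
  rcases lt_or_gt_of_ne (show entry l m ≠ entry l (m + 1) by omega) with hlt | hgt
  · exact h3142 ⟨entry l m, m, entry l (m + 1), a1, by omega, by omega, bn,
      by omega, by omega, by omega⟩
  · exact h2413 ⟨entry l (m + 1), m, entry l m, b1, by omega, by omega, an,
      by omega, by omega, by omega⟩

theorem QuarterFixed.even_of_two_mul_add_one {t : ℕ} (hq : QuarterFixed (2 * t + 1) l)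
    (hp : IsPermWord (2 * t + 1) l) : Even t := by
  have hh := hq.halfFixed hp
  have hc : entry l (t + 1) = t + 1 := by
    have := hh (t + 1) (by omega) (by omega)
    rw [show 2 * t + 1 + 1 - (t + 1) = t + 1 by omega] at this
    omega
  let fold : ℕ → ℕ := fun i => min (entry l i) (2 * t + 1 + 1 - entry l i)
  suffices ∀ i ∈ Finset.Icc 1 t, fold i ∈ Finset.Icc 1 t ∧ fold (fold i) = i ∧ fold i ≠ i by
    simpa using Finset.even_card_of_involution fold (fun i hi => (this i hi).1)
      (fun i hi => (this i hi).2.1) (fun i hi => (this i hi).2.2)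
  intro i hi
  rw [Finset.mem_Icc] at hi
  obtain ⟨e1, en⟩ := hp.entry_mem (i := i) hi.1 (by omega)
  have hwwi := hq i hi.1 (by omega)
  have hwi_ne : entry l i ≠ t + 1 := fun h => by rw [h, hc] at hwwi; omega
  have hw_refl : entry l (2 * t + 1 + 1 - entry l i) = i := by
    have := hh (entry l i) e1 en
    omega
  simp only [fold, Finset.mem_Icc]
  rcases le_or_gt (entry l i) t with hlow | hhigh
  · rw [min_eq_left (by omega), hwwi]
    refine ⟨⟨e1, hlow⟩, by omega, fun h => ?_⟩
    rw [h] at hwwi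
    omega
  · rw [min_eq_right (by omega), hw_refl]
    refine ⟨⟨by omega, by omega⟩, by omega, fun h => ?_⟩
    rw [h] at hw_refl
    omega

end

/-- If `n` is a positive integer with `n % 4 ≠ 1`, there is no Baxter
permutation of length `n` fixed under quarter-turn rotation. -/
theorem no_quarter_turn_baxter_of_not_one_mod_four (n : ℕ) (hn : 0 < n) (h : n % 4 ≠ 1) :
    ¬ ∃ l : List ℕ, IsBaxter n l ∧ QuarterFixed n l := by
  rintro ⟨l, hB, hq⟩
  rcases Nat.even_or_odd n with he | ⟨t, rfl⟩
  · exact hq.not_isBaxter_of_even hn he hB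
  · obtain ⟨s, rfl⟩ := hq.even_of_two_mul_add_one hB.1
    omega
end

section
/- If w is a Baxter permutation of length n ≥ 1, then the permutation of length n−1 obtained from w by deleting the entry with value n (keeping the remaining entries in their relative order) is also a Baxter permutation. -/
/-- Deleting the entry with value `n` from a Baxter permutation of length
`n ≥ 1` yields a Baxter permutation of length `n-1`. -/
theorem baxter_erase_max (n : ℕ) (hn : 1 ≤ n) (l : List ℕ) (hl : IsBaxter n l) :
    IsBaxter (n - 1) (l.erase n) := by
  obtain ⟨hperm, h1, h2⟩ := hl
  have hlen : l.length = n := by simpa using hperm.length_eq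
  have hrange : List.range' 1 n = List.range' 1 (n - 1) ++ [n] := by
    have h : n = (n - 1) + 1 := by omega
    rw [h, List.range'_concat]
    congr 1
    simp; omega
  have hmem : n ∈ l := hperm.mem_iff.2 (by rw [List.mem_range'_1]; omega)
  have hperm' : (l.erase n).Perm (List.range' 1 (n - 1)) := by
    have := hperm.erase n
    rw [hrange, List.erase_append_right _ (by rw [List.mem_range'_1]; omega)] at this
    simpa using this
  set m := l.idxOf n with hm_def
  have hm : m < l.length := List.idxOf_lt_length_iff.2 hmem
  have hEn : entry l (m + 1) = n := by
    simp only [entry, Nat.add_sub_cancel]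
    rw [List.getD_eq_getElem _ _ hm]
    exact List.getElem_idxOf hm
  have herase : l.erase n = l.eraseIdx m := (List.eraseIdx_idxOf_eq_erase n l).symm
  have hEle : ∀ q, 1 ≤ q → q ≤ m → entry (l.erase n) q = entry l q := by
    intro q hq1 hq2
    simp only [entry, herase]
    have h1' : q - 1 + 1 = q := by omega
    have := List.getElem?_eraseIdx (l := l) (i := m) (j := q - 1)
    rw [h1', if_pos (by omega)] at this
    simp only [List.getD_eq_getElem?_getD, this]
  have hEgt : ∀ q, m < q → entry (l.erase n) q = entry l (q + 1) := by
    intro q hq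
    simp only [entry, herase, Nat.add_sub_cancel]
    rcases Nat.eq_zero_or_pos q with h0 | h0
    · omega
    have h1' : q - 1 + 1 = q := by omega
    have := List.getElem?_eraseIdx (l := l) (i := m) (j := q - 1)
    rw [h1', if_neg (by omega)] at this
    simp only [List.getD_eq_getElem?_getD, this]
  have hlt : ∀ q, 1 ≤ q → q ≤ n - 1 → entry (l.erase n) q < n := by
    intro q hq1 hq2
    have hlen' : (l.erase n).length = n - 1 := by simpa using hperm'.length_eq
    have hmem' : (l.erase n).getD (q - 1) 0 ∈ l.erase n := by
      rw [List.getD_eq_getElem _ _ (by omega)]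
      exact List.getElem_mem _
    have := hperm'.mem_iff.1 hmem'
    rw [List.mem_range'_1] at this
    simp only [entry]
    omega
  refine ⟨hperm', ?_, ?_⟩
  · rintro ⟨i, j, k, hi, hij, hjk, hk, p1, p2, p3⟩
    by_cases hkm : k ≤ m
    · rw [hEle j (by omega) (by omega), hEle k (by omega) hkm] at p1
      rw [hEle k (by omega) hkm, hEle i hi (by omega)] at p2
      rw [hEle i hi (by omega), hEle (j+1) (by omega) (by omega)] at p3
      exact h1 ⟨i, j, k, hi, hij, hjk, by omega, p1, p2, p3⟩
    by_cases hjm1 : j + 1 ≤ m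
    · rw [hEle j (by omega) (by omega), hEgt k (by omega)] at p1
      rw [hEgt k (by omega), hEle i hi (by omega)] at p2
      rw [hEle i hi (by omega), hEle (j+1) (by omega) hjm1] at p3
      exact h1 ⟨i, j, k + 1, hi, hij, by omega, by omega, p1, p2, p3⟩
    by_cases hjm : j ≤ m
    · -- m = j : the deleted n sits at position j+1 of l
      have hin : entry (l.erase n) i < n := hlt i hi (by omega)
      rw [hEle j (by omega) hjm, hEgt k (by omega)] at p1
      rw [hEgt k (by omega), hEle i hi (by omega)] at p2
      rw [hEle i hi (by omega)] at hin
      have hmj : m = j := by omega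
      refine h1 ⟨i, j, k + 1, hi, hij, by omega, by omega, p1, p2, ?_⟩
      rw [← hmj, hEn]
      exact hin
    by_cases him : i ≤ m
    · rw [hEgt j (by omega), hEgt k (by omega)] at p1
      rw [hEgt k (by omega), hEle i hi him] at p2
      rw [hEle i hi him, hEgt (j+1) (by omega)] at p3
      exact h1 ⟨i, j + 1, k + 1, hi, by omega, by omega, by omega, p1, p2, p3⟩
    · rw [hEgt j (by omega), hEgt k (by omega)] at p1
      rw [hEgt k (by omega), hEgt i (by omega)] at p2
      rw [hEgt i (by omega), hEgt (j+1) (by omega)] at p3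
      exact h1 ⟨i + 1, j + 1, k + 1, by omega, by omega, by omega, by omega, p1, p2, p3⟩
  · rintro ⟨i, j, k, hi, hij, hjk, hk, p1, p2, p3⟩
    by_cases hkm : k ≤ m
    · rw [hEle (j+1) (by omega) (by omega), hEle i hi (by omega)] at p1
      rw [hEle i hi (by omega), hEle k (by omega) hkm] at p2
      rw [hEle k (by omega) hkm, hEle j (by omega) (by omega)] at p3
      exact h2 ⟨i, j, k, hi, hij, hjk, by omega, p1, p2, p3⟩
    by_cases hjm1 : j + 1 ≤ m
    · rw [hEle (j+1) (by omega) hjm1, hEle i hi (by omega)] at p1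
      rw [hEle i hi (by omega), hEgt k (by omega)] at p2
      rw [hEgt k (by omega), hEle j (by omega) (by omega)] at p3
      exact h2 ⟨i, j, k + 1, hi, hij, by omega, by omega, p1, p2, p3⟩
    by_cases hjm : j ≤ m
    · -- m = j : deleted n at position j+1 of l; shift the "41" pair right
      have hkn : entry (l.erase n) k < n := hlt k (by omega) hk
      rw [hEgt (j+1) (by omega), hEle i hi (by omega)] at p1
      rw [hEle i hi (by omega), hEgt k (by omega)] at p2
      rw [hEgt k (by omega)] at hkn
      have hmj : m = j := by omega
      refine h2 ⟨i, j + 1, k + 1, hi, by omega, by omega, by omega, ?_, p2, ?_⟩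
      · simpa using p1
      · rw [← hmj, hEn]
        exact hkn
    by_cases him : i ≤ m
    · rw [hEgt (j+1) (by omega), hEle i hi him] at p1
      rw [hEle i hi him, hEgt k (by omega)] at p2
      rw [hEgt k (by omega), hEgt j (by omega)] at p3
      exact h2 ⟨i, j + 1, k + 1, hi, by omega, by omega, by omega, by simpa using p1, p2, p3⟩
    · rw [hEgt (j+1) (by omega), hEgt i (by omega)] at p1
      rw [hEgt i (by omega), hEgt k (by omega)] at p2
      rw [hEgt k (by omega), hEgt j (by omega)] at p3
      exact h2 ⟨i + 1, j + 1, k + 1, by omega, by omega, by omega, by omega,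
        by simpa using p1, p2, p3⟩
end

section
/- Every Baxter permutation has the same number of descents as inverse descents; that is, if w is a Baxter permutation of length n, then the number of indices i ∈ {1,…,n−1} with w(i) > w(i+1) equals the number of indices i ∈ {1,…,n−1} with w⁻¹(i) > w⁻¹(i+1). -/
/-! ### Auxiliary machinery for the proof -/

section BaxterAux

/-- descent count of a word, via adjacent pairs -/
def dcAux : List ℕ → ℕ
  | [] => 0
  | [_] => 0
  | a :: b :: t => (if b < a then 1 else 0) + dcAux (b :: t)

/-- inverse-descent count -/
def idcAux (n : ℕ) (l : List ℕ) : ℕ :=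
  ((Finset.range (n-1)).filter (fun v => l.idxOf (v+2) < l.idxOf (v+1))).card

theorem card_filter_descAux : ∀ l : List ℕ,
    ((Finset.range (l.length - 1)).filter (fun j => l.getD (j+1) 0 < l.getD j 0)).card = dcAux l
  | [] => by simp [dcAux]
  | [a] => by simp [dcAux]
  | a :: b :: t => by
    have ih := card_filter_descAux (b :: t)
    rw [Finset.card_filter] at ih ⊢
    simp only [List.length_cons, Nat.add_sub_cancel, List.getD_cons_succ] at ih ⊢
    rw [Finset.sum_range_succ']
    simp only [List.getD_cons_succ, List.getD_cons_zero]
    rw [dcAux]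
    omega

def corrAux (A B : List ℕ) : ℕ :=
  match A.getLast?, B.head? with
  | some a, some b => if b < a then 1 else 0
  | _, _ => 0

theorem dcAux_insert (x : ℕ) : ∀ (A B : List ℕ), (∀ y ∈ A, y < x) → (∀ y ∈ B, y < x) →
    dcAux (A ++ x :: B) + corrAux A B = dcAux (A ++ B) + (if B = [] then 0 else 1)
  | [], B, _, hB => by
    match B with
    | [] => simp [dcAux, corrAux]
    | b :: s => simp [dcAux, corrAux, hB b (by simp)]; omega
  | [a], B, hA, hB => by
    have hax : a < x := hA a (by simp)
    match B with
    | [] => simp [dcAux, corrAux, Nat.not_lt.2 hax.le]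
    | b :: s =>
      simp [dcAux, corrAux, Nat.not_lt.2 hax.le, hB b (by simp)]
      omega
  | a1 :: a2 :: A', B, hA, hB => by
    have ih := dcAux_insert x (a2 :: A') B
      (fun y hy => hA y (by simp [List.mem_cons] at hy ⊢; tauto)) hB
    have hc : corrAux (a1 :: a2 :: A') B = corrAux (a2 :: A') B := by
      simp [corrAux, List.getLast?_cons_cons]
    simp only [List.cons_append, List.append_eq, dcAux] at ih ⊢
    rw [hc]
    omega

theorem des_eq_filterAux (n : ℕ) (l : List ℕ) :
    des n l = ((Finset.range (n-1)).filter (fun j => l.getD (j+1) 0 < l.getD j 0)).card := by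
  have hset : {i : ℕ | 1 ≤ i ∧ i + 1 ≤ n ∧ entry l (i + 1) < entry l i}
      = (fun j => j + 1) '' ↑((Finset.range (n-1)).filter
          (fun j => l.getD (j+1) 0 < l.getD j 0)) := by
    ext i
    simp only [Set.mem_setOf_eq, Set.mem_image, Finset.coe_filter, Finset.mem_range,
      Set.mem_setOf_eq, entry]
    constructor
    · rintro ⟨h1, h2, h3⟩
      refine ⟨i - 1, ⟨by omega, ?_⟩, by omega⟩
      have hh : i - 1 + 1 = i := by omega
      rw [hh]
      simpa using h3
    · rintro ⟨j, ⟨hj, hd⟩, rfl⟩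
      refine ⟨by omega, by omega, ?_⟩
      simpa using hd
  rw [des, hset, Set.ncard_image_of_injective _ (fun a b => by omega), Set.ncard_coe_finset]

theorem invWord_getDAux (n : ℕ) (l : List ℕ) (j : ℕ) (h : j < n) :
    (invWord n l).getD j 0 = l.idxOf (j+1) + 1 := by
  have hlen : (invWord n l).length = n := by simp [invWord]
  rw [List.getD_eq_getElem _ _ (by omega)]
  simp [invWord, pos, List.getElem_range', Nat.add_comm]

theorem des_invWordAux (n : ℕ) (l : List ℕ) : des n (invWord n l) = idcAux n l := by
  rw [des_eq_filterAux, idcAux]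
  congr 1
  apply Finset.filter_congr
  intro j hj
  simp only [Finset.mem_range] at hj
  rw [invWord_getDAux n l j (by omega), invWord_getDAux n l (j+1) (by omega)]
  simp

theorem list_exists_maxAux (A : List ℕ) (h : A ≠ []) : ∃ m ∈ A, ∀ y ∈ A, y ≤ m := by
  induction A with
  | nil => simp at h
  | cons a t ih =>
    rcases eq_or_ne t [] with rfl | ht
    · exact ⟨a, by simp, by simp⟩
    · obtain ⟨m, hm, hall⟩ := ih ht
      rcases le_total a m with h1 | h1
      · exact ⟨m, by simp [hm], by
          intro y hy; rcases List.mem_cons.1 hy with rfl | hy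
          exacts [h1, hall y hy]⟩
      · exact ⟨a, by simp, by
          intro y hy; rcases List.mem_cons.1 hy with rfl | hy
          exacts [le_rfl, (hall y hy).trans h1]⟩

theorem entry_append_leftAux (A C : List ℕ) (i : ℕ) (h1 : 1 ≤ i) (h2 : i ≤ A.length) :
    entry (A ++ C) i = entry A i := by
  unfold entry
  rw [List.getD_append A C 0 (i-1) (by omega)]

theorem entry_shiftAux (A B : List ℕ) (x : ℕ) (i : ℕ) (h1 : 1 ≤ i) :
    entry (A ++ B) i = if i ≤ A.length then entry (A ++ x :: B) i
      else entry (A ++ x :: B) (i + 1) := by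
  unfold entry
  split
  · rw [List.getD_append A B 0 (i-1) (by omega), List.getD_append A _ 0 (i-1) (by omega)]
  · rw [List.getD_append_right A B 0 (i-1) (by omega),
      List.getD_append_right A _ 0 (i+1-1) (by omega)]
    have h3 : i + 1 - 1 - A.length = (i - 1 - A.length) + 1 := by omega
    rw [h3, List.getD_cons_succ]

theorem entry_at_midAux (A B : List ℕ) (x : ℕ) : entry (A ++ x :: B) (A.length + 1) = x := by
  unfold entry
  rw [List.getD_append_right A _ 0 _ (by omega)]
  simp

theorem entry_of_AAux (A C : List ℕ) (y : ℕ) (hy : y ∈ A) :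
    entry (A ++ C) (A.idxOf y + 1) = y := by
  have hlt : A.idxOf y < A.length := List.idxOf_lt_length_iff.2 hy
  rw [entry_append_leftAux A C _ (by omega) (by omega)]
  unfold entry
  simp only [Nat.add_sub_cancel]
  rw [List.getD_eq_getElem A 0 hlt]
  exact List.getElem_idxOf hlt

theorem entry_of_BAux (A B : List ℕ) (x z : ℕ) (hz : z ∈ B) :
    entry (A ++ x :: B) (A.length + 2 + B.idxOf z) = z := by
  have hlt : B.idxOf z < B.length := List.idxOf_lt_length_iff.2 hz
  unfold entry
  rw [List.getD_append_right A _ 0 _ (by omega)]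
  have h3 : A.length + 2 + B.idxOf z - 1 - A.length = B.idxOf z + 1 := by omega
  rw [h3, List.getD_cons_succ, List.getD_eq_getElem B 0 hlt]
  exact List.getElem_idxOf hlt

theorem entry_getLastAux (A C : List ℕ) (h : A ≠ []) :
    entry (A ++ C) A.length = A.getLast h := by
  have hpos : 0 < A.length := List.length_pos_iff.2 h
  rw [entry_append_leftAux A C _ (by omega) le_rfl]
  unfold entry
  rw [List.getD_eq_getElem A 0 (by omega), List.getLast_eq_getElem]

theorem entry_memAux (l : List ℕ) (i : ℕ) (h1 : 1 ≤ i) (h2 : i ≤ l.length) :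
    entry l i ∈ l := by
  unfold entry
  rw [List.getD_eq_getElem l 0 (by omega)]
  exact List.getElem_mem _

theorem mem_of_getLast?_eqAux (A : List ℕ) (a : ℕ) (h : A.getLast? = some a) : a ∈ A := by
  obtain ⟨hne, rfl⟩ := List.mem_getLast?_eq_getLast (l := A) (x := a) (by simp [h])
  exact List.getLast_mem hne

theorem baxter_deleteAux (n : ℕ) (A B : List ℕ)
    (hb : IsBaxter (n+1) (A ++ (n+1) :: B))
    (hlen : (A++B).length = n)
    (hub : ∀ y ∈ A ++ B, y ≤ n)
    (hperm' : IsPermWord n (A ++ B)) :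
    IsBaxter n (A ++ B) := by
  set l := A ++ (n+1) :: B with hl
  set l' := A ++ B with hl'
  set p := A.length with hp
  have hsh : ∀ i, 1 ≤ i → entry l' i = if i ≤ p then entry l i else entry l (i+1) :=
    fun i hi => entry_shiftAux A B (n+1) i hi
  have hmid : entry l (p + 1) = n + 1 := entry_at_midAux A B (n+1)
  have hubE : ∀ i, 1 ≤ i → i ≤ n → entry l' i ≤ n := fun i hi hn =>
    hub _ (entry_memAux l' i hi (by omega))
  have eL : ∀ m, 1 ≤ m → m ≤ p → entry l' m = entry l m := by
    intro m h1 h2; rw [hsh m h1, if_pos h2]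
  have eR : ∀ m, 1 ≤ m → p < m → entry l' m = entry l (m+1) := by
    intro m h1 h2; rw [hsh m h1, if_neg (by omega)]
  refine ⟨hperm', ?_, ?_⟩
  · rintro ⟨i, j, k, h1, h2, h3, h4, hq1, hq2, hq3⟩
    have hei : entry l' i ≤ n := hubE i h1 (by omega)
    have hek : entry l' k ≤ n := hubE k (by omega) h4
    rcases lt_trichotomy j p with hjp | rfl | hjp
    · simp only [eL i h1 (by omega), eL j (by omega) (by omega),
        eL (j+1) (by omega) (by omega)] at hq1 hq2 hq3
      rcases le_or_gt k p with hkp | hkp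
      · simp only [eL k (by omega) hkp] at hq1 hq2
        exact hb.2.1 ⟨i, j, k, h1, h2, h3, by omega, hq1, hq2, hq3⟩
      · simp only [eR k (by omega) hkp] at hq1 hq2
        exact hb.2.1 ⟨i, j, k+1, h1, h2, by omega, by omega, hq1, hq2, hq3⟩
    · simp only [eL i h1 (by omega), eL p (by omega) le_rfl,
        eR k (by omega) (by omega)] at hq1 hq2
      refine hb.2.1 ⟨i, p, k+1, h1, h2, by omega, by omega, hq1, hq2, ?_⟩
      rw [hmid, ← eL i h1 (by omega)]; omega
    · simp only [eR j (by omega) hjp, eR (j+1) (by omega) (by omega),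
        eR k (by omega) (by omega)] at hq1 hq2 hq3
      rcases le_or_gt i p with hip | hip
      · simp only [eL i h1 hip] at hq2 hq3
        exact hb.2.1 ⟨i, j+1, k+1, h1, by omega, by omega, by omega, hq1, hq2, hq3⟩
      · simp only [eR i h1 hip] at hq2 hq3
        exact hb.2.1 ⟨i+1, j+1, k+1, by omega, by omega, by omega, by omega, hq1, hq2, hq3⟩
  · rintro ⟨i, j, k, h1, h2, h3, h4, hq1, hq2, hq3⟩
    have hei : entry l' i ≤ n := hubE i h1 (by omega)
    have hek : entry l' k ≤ n := hubE k (by omega) h4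
    rcases lt_trichotomy j p with hjp | rfl | hjp
    · simp only [eL i h1 (by omega), eL j (by omega) (by omega),
        eL (j+1) (by omega) (by omega)] at hq1 hq2 hq3
      rcases le_or_gt k p with hkp | hkp
      · simp only [eL k (by omega) hkp] at hq2 hq3
        exact hb.2.2 ⟨i, j, k, h1, h2, h3, by omega, hq1, hq2, hq3⟩
      · simp only [eR k (by omega) hkp] at hq2 hq3
        exact hb.2.2 ⟨i, j, k+1, h1, h2, by omega, by omega, hq1, hq2, hq3⟩
    · simp only [eL i h1 (by omega), eR (p+1) (by omega) (by omega),
        eR k (by omega) (by omega)] at hq1 hq2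
      refine hb.2.2 ⟨i, p+1, k+1, h1, by omega, by omega, by omega, hq1, hq2, ?_⟩
      rw [hmid, ← eR k (by omega) (by omega)]; omega
    · simp only [eR j (by omega) hjp, eR (j+1) (by omega) (by omega),
        eR k (by omega) (by omega)] at hq1 hq2 hq3
      rcases le_or_gt i p with hip | hip
      · simp only [eL i h1 hip] at hq1 hq2
        exact hb.2.2 ⟨i, j+1, k+1, h1, by omega, by omega, by omega, hq1, hq2, hq3⟩
      · simp only [eR i h1 hip] at hq1 hq2
        exact hb.2.2 ⟨i+1, j+1, k+1, by omega, by omega, by omega, by omega, hq1, hq2, hq3⟩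

theorem baxter_activeAux (n : ℕ) (A B : List ℕ)
    (hb : IsBaxter (n+1) (A ++ (n+1) :: B))
    (hnd : (A ++ (n+1) :: B).Nodup)
    (hubA : ∀ y ∈ A, y ≤ n) (hubB : ∀ z ∈ B, z ≤ n) :
    B = [] ∨ (∃ b B₂, B = b :: B₂ ∧ ∀ y ∈ A, y < b) ∨
      (∃ (h : A ≠ []), ∀ z ∈ B, z < A.getLast h) := by
  set l := A ++ (n+1) :: B with hl
  set p := A.length with hp
  have hlen : p + 1 + B.length = n + 1 := by
    have := hb.1.length_eq
    simp [hl] at this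
    omega
  have hdisj : A.Disjoint ((n+1) :: B) := List.disjoint_of_nodup_append hnd
  rcases eq_or_ne B [] with rfl | hB
  · exact Or.inl rfl
  right
  obtain ⟨b, B₂, rfl⟩ := List.exists_cons_of_ne_nil hB
  by_cases hcase : ∀ y ∈ A, y < b
  · exact Or.inl ⟨b, B₂, rfl, hcase⟩
  right
  push_neg at hcase
  obtain ⟨y, hyA, hyb⟩ := hcase
  have hA : A ≠ [] := List.ne_nil_of_mem hyA
  refine ⟨hA, ?_⟩
  set a := A.getLast hA with ha
  have haA : a ∈ A := List.getLast_mem hA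
  by_contra hz
  push_neg at hz
  obtain ⟨z, hzB, hza⟩ := hz
  obtain ⟨mA, hmA, hmaxA⟩ := list_exists_maxAux A hA
  obtain ⟨mB, hmB, hmaxB⟩ := list_exists_maxAux (b :: B₂) (by simp)
  have hbmA : b < mA := by
    have h1 : y ≠ b := fun h => hdisj hyA (by simp [h])
    have h2 : y ≤ mA := hmaxA y hyA
    omega
  have hamB : a < mB := by
    have h1 : a ≠ z := fun h => hdisj haA (by rw [h]; exact List.mem_cons_of_mem _ hzB)
    have h2 : z ≤ mB := hmaxB z hzB
    omega
  have hne : mA ≠ mB := fun h => hdisj hmA (by simp [h, List.mem_cons] at hmB ⊢; tauto)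
  have hpa : entry l p = a := entry_getLastAux A _ hA
  have hmid : entry l (p + 1) = n + 1 := entry_at_midAux A _ (n+1)
  have hIA : entry l (A.idxOf mA + 1) = mA := entry_of_AAux A _ mA hmA
  have hKB : entry l (p + 2 + (b :: B₂).idxOf mB) = mB := entry_of_BAux A _ (n+1) mB hmB
  have hidxA : A.idxOf mA < p := List.idxOf_lt_length_iff.2 hmA
  have hidxB : (b :: B₂).idxOf mB < (b :: B₂).length := List.idxOf_lt_length_iff.2 hmB
  rcases lt_or_gt_of_ne hne with hlt | hgt
  · -- mA < mB : pattern 2-41-3 at (idxA+1, p+1, p+2+idxB)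
    have hmBb : mB ≠ b := by omega
    have hidx0 : (b :: B₂).idxOf mB ≠ 0 := by
      rw [List.idxOf_cons_ne B₂ (Ne.symm hmBb)]; omega
    refine hb.2.2 ⟨A.idxOf mA + 1, p + 1, p + 2 + (b :: B₂).idxOf mB,
      by omega, by omega, by omega, by omega, ?_, ?_, ?_⟩
    · have hpb : entry l (p + 1 + 1) = b := by
        have := entry_of_BAux A (b :: B₂) (n+1) b (by simp)
        rw [List.idxOf_cons_self] at this
        simpa using this
      rw [hpb, hIA]; omega
    · rw [hIA, hKB]; exact hlt
    · rw [hKB, hmid]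
      have := hubB mB hmB
      omega
  · -- mB < mA : pattern 3-14-2 at (idxA+1, p, p+2+idxB)
    have hmAa : mA ≠ a := by omega
    have hidxa : A.idxOf mA ≠ p - 1 := by
      intro h
      apply hmAa
      have h1 : A[A.idxOf mA] = mA := List.getElem_idxOf hidxA
      simp only [h] at h1
      rw [← h1, ha, List.getLast_eq_getElem]
    refine hb.2.1 ⟨A.idxOf mA + 1, p, p + 2 + (b :: B₂).idxOf mB,
      by omega, by omega, by omega, by omega, ?_, ?_, ?_⟩
    · rw [hpa, hKB]; exact hamB
    · rw [hKB, hIA]; exact hgt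
    · rw [hIA, hmid]
      have := hubA mA hmA
      omega

theorem idc_stepAux (n : ℕ) (A B : List ℕ)
    (hperm' : (A ++ B).Perm (List.range' 1 n))
    (hnd : (A ++ (n+1) :: B).Nodup) :
    idcAux (n+1) (A ++ (n+1) :: B) = idcAux n (A ++ B) + (if n ∈ B then 1 else 0) := by
  set l := A ++ (n+1) :: B with hl
  set l' := A ++ B with hl'
  have hdisj : A.Disjoint ((n+1) :: B) := List.disjoint_of_nodup_append hnd
  have hndB : ((n+1) :: B).Nodup := (List.nodup_append.1 hnd).2.1
  have hx_notA : (n+1) ∉ A := fun h => hdisj h (by simp)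
  have hx_notB : (n+1) ∉ B := by
    intro h; exact (List.nodup_cons.1 hndB).1 h
  have hmem : ∀ u, u ∈ l' ↔ 1 ≤ u ∧ u ≤ n := by
    intro u
    rw [hperm'.mem_iff, List.mem_range'_1]
    omega
  have fA : ∀ u ∈ A, l.idxOf u = A.idxOf u ∧ l'.idxOf u = A.idxOf u :=
    fun u hu => ⟨List.idxOf_append_of_mem hu, List.idxOf_append_of_mem hu⟩
  have fB : ∀ u ∈ B, l.idxOf u = A.length + 1 + B.idxOf u ∧
      l'.idxOf u = A.length + B.idxOf u := by
    intro u hu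
    have huA : u ∉ A := fun h => hdisj h (by simp [hu])
    have hune : u ≠ n + 1 := fun h => hx_notB (h ▸ hu)
    constructor
    · rw [hl, List.idxOf_append_of_notMem huA, List.idxOf_cons_ne B (Ne.symm hune)]
      omega
    · rw [hl', List.idxOf_append_of_notMem huA]
  have key : ∀ u ∈ l', ∀ w ∈ l', (l.idxOf u < l.idxOf w ↔ l'.idxOf u < l'.idxOf w) := by
    intro u hu w hw
    rcases List.mem_append.1 hu with huA | huB <;> rcases List.mem_append.1 hw with hwA | hwB
    · rw [(fA u huA).1, (fA u huA).2, (fA w hwA).1, (fA w hwA).2]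
    · have h1 := fA u huA; have h2 := fB w hwB
      have h3 : A.idxOf u < A.length := List.idxOf_lt_length_iff.2 huA
      rw [h1.1, h1.2, h2.1, h2.2]; omega
    · have h1 := fB u huB; have h2 := fA w hwA
      have h3 : A.idxOf w < A.length := List.idxOf_lt_length_iff.2 hwA
      rw [h1.1, h1.2, h2.1, h2.2]; omega
    · have h1 := fB u huB; have h2 := fB w hwB
      rw [h1.1, h1.2, h2.1, h2.2]; omega
  rcases Nat.eq_zero_or_pos n with rfl | hn
  · have hnil : l' = [] := List.Perm.eq_nil (by simpa using hperm')
    have hB : B = [] := by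
      rcases List.append_eq_nil_iff.1 hnil with ⟨-, h⟩; exact h
    simp [idcAux, hB]
  · obtain ⟨m, rfl⟩ : ∃ m, n = m + 1 := ⟨n - 1, by omega⟩
    have hidx_x : l.idxOf (m+2) = A.length := by
      rw [hl]
      rw [List.idxOf_append_of_notMem hx_notA]
      rw [show m+2 = m+1+1 from rfl, List.idxOf_cons_self]
      omega
    have hnmem : (m+1) ∈ l' := (hmem (m+1)).2 ⟨by omega, le_rfl⟩
    have hsplit : idcAux (m+1+1) l =
        ((Finset.range m).filter (fun v => l.idxOf (v+2) < l.idxOf (v+1))).card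
          + (if l.idxOf (m+2) < l.idxOf (m+1) then 1 else 0) := by
      rw [idcAux]
      simp only [Nat.add_sub_cancel]
      rw [Finset.range_add_one, Finset.filter_insert]
      split <;> simp [Finset.card_insert_of_notMem, Finset.notMem_range_self]
    rw [hsplit]
    have hfc : ((Finset.range m).filter (fun v => l.idxOf (v+2) < l.idxOf (v+1))).card
        = idcAux (m+1) l' := by
      rw [idcAux]
      simp only [Nat.add_sub_cancel]
      congr 1
      apply Finset.filter_congr
      intro v hv
      simp only [Finset.mem_range] at hv
      have h1 : (v+1) ∈ l' := (hmem (v+1)).2 ⟨by omega, by omega⟩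
      have h2 : (v+2) ∈ l' := (hmem (v+2)).2 ⟨by omega, by omega⟩
      exact key (v+2) h2 (v+1) h1
    rw [hfc]
    congr 1
    rcases List.mem_append.1 hnmem with hA | hB
    · have hnB : (m+1) ∉ B := fun h => hdisj hA (by simp [h])
      have h1 := (fA _ hA).1
      have h2 : A.idxOf (m+1) < A.length := List.idxOf_lt_length_iff.2 hA
      rw [if_neg (by rw [h1, hidx_x]; omega), if_neg (by simpa using hnB)]
    · have h1 := (fB _ hB).1
      rw [if_pos (by rw [h1, hidx_x]; omega), if_pos (by simpa using hB)]


theorem main_auxAux : ∀ n : ℕ, ∀ l : List ℕ, IsBaxter n l → dcAux l = idcAux n l := by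
  intro n
  induction n with
  | zero =>
    intro l hb
    have h0 : l = [] := List.Perm.eq_nil
      (by simpa using (show l.Perm (List.range' 1 0) from hb.1))
    subst h0
    simp [dcAux, idcAux]
  | succ m ih =>
    intro l hb
    have hperm : l.Perm (List.range' 1 (m+1)) := hb.1
    have hxl : (m+1) ∈ l := hperm.mem_iff.2 (by simp [List.mem_range'_1])
    have hq : l.idxOf (m+1) < l.length := List.idxOf_lt_length_iff.2 hxl
    obtain ⟨A, B, rfl⟩ : ∃ A B, l = A ++ (m+1) :: B := by
      refine ⟨l.take (l.idxOf (m+1)), l.drop (l.idxOf (m+1) + 1), ?_⟩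
      conv_lhs => rw [← List.take_append_drop (l.idxOf (m+1)) l]
      rw [List.drop_eq_getElem_cons hq, List.getElem_idxOf hq]
    have hnd : (A ++ (m+1) :: B).Nodup := (hperm.nodup_iff).2 (List.nodup_range' (s := 1) (n := m+1))
    have hpermAB : (A ++ B).Perm (List.range' 1 m) := by
      have h1 : List.range' 1 (m+1) = List.range' 1 m ++ [1+m] := by
        rw [List.range'_concat (s := 1) (n := m)]; norm_num
      have h2 : ((m+1) :: (A ++ B)).Perm ((m+1) :: List.range' 1 m) := by
        refine (List.perm_middle.symm.trans hperm).trans ?_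
        rw [h1]
        have h3 : (List.range' 1 m ++ (1+m) :: ([] : List ℕ)).Perm
            ((1+m) :: (List.range' 1 m ++ [])) := List.perm_middle
        simpa [Nat.add_comm] using h3
      exact h2.cons_inv
    have hub : ∀ y ∈ A ++ B, y ≤ m := by
      intro y hy
      have := hpermAB.subset hy
      rw [List.mem_range'_1] at this
      omega
    have hubA : ∀ y ∈ A, y ≤ m := fun y hy => hub y (List.mem_append.2 (Or.inl hy))
    have hubB : ∀ z ∈ B, z ≤ m := fun z hz => hub z (List.mem_append.2 (Or.inr hz))
    have hlen : (A ++ B).length = m := by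
      have := hpermAB.length_eq
      simpa using this
    have hbax' : IsBaxter m (A ++ B) := baxter_deleteAux m A B hb hlen hub hpermAB
    have ihAB : dcAux (A ++ B) = idcAux m (A ++ B) := ih (A ++ B) hbax'
    have hdc : dcAux (A ++ (m+1) :: B) + corrAux A B
        = dcAux (A ++ B) + (if B = [] then 0 else 1) :=
      dcAux_insert (m+1) A B (fun y hy => by have := hubA y hy; omega)
        (fun z hz => by have := hubB z hz; omega)
    have hidc : idcAux (m+1) (A ++ (m+1) :: B)
        = idcAux m (A ++ B) + (if m ∈ B then 1 else 0) := idc_stepAux m A B hpermAB hnd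
    have hmemAB : ∀ u, u ∈ A ++ B ↔ 1 ≤ u ∧ u ≤ m := by
      intro u
      rw [hpermAB.mem_iff, List.mem_range'_1]
      omega
    rcases baxter_activeAux m A B hb hnd hubA hubB with hB0 | ⟨b, B₂, rfl, hltb⟩ | ⟨hA, hlta⟩
    · -- B = []
      subst hB0
      have hc : corrAux A [] = 0 := by
        cases h : A.getLast? <;> simp [corrAux, h]
      rw [hc] at hdc
      rw [hidc]
      simp at hdc ihAB ⊢
      omega
    · -- B = b :: B₂ and every entry of A is < b
      have hc : corrAux A (b :: B₂) = 0 := by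
        cases h : A.getLast? with
        | none => simp [corrAux, h]
        | some a =>
          have haA : a ∈ A := mem_of_getLast?_eqAux A a h
          have : a < b := hltb a haA
          simp [corrAux, h]
          omega
      have hm1 : 1 ≤ m := by
        have := hlen
        simp at this
        omega
      have hmB : m ∈ b :: B₂ := by
        have hm : m ∈ A ++ b :: B₂ := (hmemAB m).2 ⟨hm1, le_rfl⟩
        rcases List.mem_append.1 hm with h | h
        · exfalso
          have h1 : m < b := hltb m h
          have h2 : b ≤ m := hubB b (by simp)
          omega
        · exact h
      rw [hc] at hdc
      rw [hidc, if_pos hmB]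
      simp at hdc
      omega
    · -- every entry of B is < A.getLast hA
      rcases eq_or_ne B [] with rfl | hBne
      · have hc : corrAux A [] = 0 := by
          cases h : A.getLast? <;> simp [corrAux, h]
        rw [hc] at hdc
        rw [hidc]
        simp at hdc ihAB ⊢
        omega
      · obtain ⟨b, B₂, rfl⟩ := List.exists_cons_of_ne_nil hBne
        have hc : corrAux A (b :: B₂) = 1 := by
          have h := List.getLast?_eq_getLast (l := A) hA
          have hb' : b < A.getLast hA := hlta b (by simp)
          simp [corrAux, h, hb']
        have hmB : m ∉ b :: B₂ := by
          intro h
          have h1 : m < A.getLast hA := hlta m h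
          have h2 : A.getLast hA ≤ m := hubA _ (List.getLast_mem hA)
          omega
        rw [hc] at hdc
        rw [hidc, if_neg hmB]
        simp at hdc
        omega

end BaxterAux

/-- A Baxter permutation has the same number of descents as inverse descents. -/
theorem baxter_des_eq_ides (n : ℕ) (l : List ℕ) (hl : IsBaxter n l) :
    des n l = des n (invWord n l) := by
  have hlenl : l.length = n := by
    have := hl.1.length_eq
    simpa using this
  have h1 : des n l = dcAux l := by
    rw [des_eq_filterAux, ← card_filter_descAux l, hlenl]
  have h2 : des n (invWord n l) = idcAux n l := des_invWordAux n l
  rw [h1, h2]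
  exact main_auxAux n l hl
end

section
/- If w' is a Baxter permutation of length n+2 (n ≥ 0) fixed under half-turn (180°) rotation of its permutation matrix, then the permutation w of length n obtained from w' by deleting the entries with values n+2 and 1 and subtracting 1 from each remaining entry is a Baxter permutation fixed under half-turn rotation. -/
/-- `Fin.succAbove` for 1-indexed positions: the `i`-th entry of a word with its `p`-th entry
deleted is the `succAbove p i`-th entry of the word. -/
def succAbove (p i : ℕ) : ℕ := if i < p then i else i + 1

lemma succAbove_lt_succAbove {p i j : ℕ} (h : i < j) : succAbove p i < succAbove p j := by
  unfold succAbove; split_ifs <;> omega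

lemma le_succAbove (p i : ℕ) : i ≤ succAbove p i := by
  unfold succAbove; split_ifs <;> omega

lemma succAbove_le (p i : ℕ) : succAbove p i ≤ i + 1 := by
  unfold succAbove; split_ifs <;> omega

lemma succAbove_ne (p i : ℕ) : succAbove p i ≠ p := by
  unfold succAbove; split_ifs <;> omega

lemma succAbove_succ {p j : ℕ} (h : p ≠ j + 1) : succAbove p (j + 1) = succAbove p j + 1 := by
  unfold succAbove; split_ifs <;> omega

lemma succAbove_of_lt {p i : ℕ} (h : i < p) : succAbove p i = i := if_pos h

lemma succAbove_of_le {p i : ℕ} (h : p ≤ i) : succAbove p i = i + 1 := if_neg (by omega)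

def AvoidsBaxterPatterns (n : ℕ) (w : ℕ → ℕ) : Prop :=
  (¬ ∃ i j k, 1 ≤ i ∧ i < j ∧ j + 1 < k ∧ k ≤ n ∧
      w j < w k ∧ w k < w i ∧ w i < w (j + 1)) ∧
  (¬ ∃ i j k, 1 ≤ i ∧ i < j ∧ j + 1 < k ∧ k ≤ n ∧
      w (j + 1) < w i ∧ w i < w k ∧ w k < w j)

lemma isBaxter_iff {n : ℕ} {l : List ℕ} :
    IsBaxter n l ↔ IsPermWord n l ∧ AvoidsBaxterPatterns n (entry l) := Iff.rfl

namespace AvoidsBaxterPatterns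

variable {n : ℕ} {w : ℕ → ℕ}

lemma of_lt_iff {v : ℕ → ℕ} (h : AvoidsBaxterPatterns n w)
    (hvw : ∀ i j, 1 ≤ i → i ≤ n → 1 ≤ j → j ≤ n → (v i < v j ↔ w i < w j)) :
    AvoidsBaxterPatterns n v := by
  constructor
  · rintro ⟨i, j, k, hi, hij, hjk, hk, a, b, c⟩
    exact h.1 ⟨i, j, k, hi, hij, hjk, hk, (hvw _ _ (by omega) (by omega) (by omega) hk).1 a,
      (hvw _ _ (by omega) hk hi (by omega)).1 b,
      (hvw _ _ hi (by omega) (by omega) (by omega)).1 c⟩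
  · rintro ⟨i, j, k, hi, hij, hjk, hk, a, b, c⟩
    exact h.2 ⟨i, j, k, hi, hij, hjk, hk, (hvw _ _ (by omega) (by omega) hi (by omega)).1 a,
      (hvw _ _ hi (by omega) (by omega) hk).1 b,
      (hvw _ _ (by omega) hk (by omega) (by omega)).1 c⟩

lemma comp_succAbove {p : ℕ} (h : AvoidsBaxterPatterns (n + 1) w)
    (hext : (∀ k, 1 ≤ k → k ≤ n + 1 → k ≠ p → w k < w p) ∨
      (∀ k, 1 ≤ k → k ≤ n + 1 → k ≠ p → w p < w k)) :
    AvoidsBaxterPatterns n (w ∘ succAbove p) := by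
  obtain ⟨h₁, h₂⟩ := h
  constructor
  · rintro ⟨i, j, k, hi, hij, hjk, hk, a, b, c⟩
    simp only [Function.comp] at a b c
    have hi' := le_succAbove p i
    have hik := succAbove_lt_succAbove (p := p) (show i < j by omega)
    have hk' := succAbove_le p k
    have hjk' := succAbove_lt_succAbove (p := p) hjk
    by_cases hgap : p = j + 1
    · subst hgap
      rw [succAbove_of_lt j.lt_succ_self] at a hik
      rw [succAbove_of_le le_rfl] at c hjk'
      rcases hext with hmax | hmin
      · exact h₁ ⟨_, j, _, by omega, hik, by omega, by omega, a, b,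
          c.trans (hmax _ (by omega) (by omega) (by omega))⟩
      · exact h₁ ⟨_, j + 1, _, by omega, by omega, hjk', by omega,
          hmin _ (by omega) (by omega) (succAbove_ne _ _), b, c⟩
    · rw [succAbove_succ hgap] at c hjk'
      exact h₁ ⟨_, _, _, by omega, hik, hjk', by omega, a, b, c⟩
  · rintro ⟨i, j, k, hi, hij, hjk, hk, a, b, c⟩
    simp only [Function.comp] at a b c
    have hi' := le_succAbove p i
    have hik := succAbove_lt_succAbove (p := p) (show i < j by omega)
    have hk' := succAbove_le p k
    have hjk' := succAbove_lt_succAbove (p := p) hjk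
    by_cases hgap : p = j + 1
    · subst hgap
      rw [succAbove_of_lt j.lt_succ_self] at c hik
      rw [succAbove_of_le le_rfl] at a hjk'
      rcases hext with hmax | hmin
      · exact h₂ ⟨_, j + 1, _, by omega, by omega, hjk', by omega, a, b,
          hmax _ (by omega) (by omega) (succAbove_ne _ _)⟩
      · exact h₂ ⟨_, j, _, by omega, hik, by omega, by omega,
          (hmin _ (by omega) (by omega) (by omega)).trans a, b, c⟩
    · rw [succAbove_succ hgap] at a hjk'
      exact h₂ ⟨_, _, _, by omega, hik, hjk', by omega, a, b, c⟩

end AvoidsBaxterPatterns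

lemma one_le_pos (l : List ℕ) (v : ℕ) : 1 ≤ pos l v := Nat.le_add_left 1 _

lemma pos_le_length {l : List ℕ} {v : ℕ} (hv : v ∈ l) : pos l v ≤ l.length :=
  List.idxOf_lt_length_iff.2 hv

lemma entry_pos {l : List ℕ} {v : ℕ} (hv : v ∈ l) : entry l (pos l v) = v := by
  simp only [entry, pos, Nat.add_sub_cancel]
  rw [List.getD_eq_getElem _ _ (List.idxOf_lt_length_iff.2 hv), List.getElem_idxOf]

lemma entry_erase (l : List ℕ) (v : ℕ) {i : ℕ} (hi : 1 ≤ i) :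
    entry (l.erase v) i = entry l (succAbove (pos l v) i) := by
  simp only [entry, pos, List.getD_eq_getElem?_getD, List.erase_eq_eraseIdx_of_idxOf rfl,
    List.getElem?_eraseIdx]
  by_cases h : i < l.idxOf v + 1
  · rw [succAbove, if_pos h, if_pos (by omega)]
  · rw [succAbove, if_neg h, if_neg (by omega)]
    congr 2
    omega

lemma entry_map_sub_one (l : List ℕ) (i : ℕ) : entry (l.map (· - 1)) i = entry l i - 1 :=
  List.getD_map l 0 (· - 1)

namespace IsPermWord

variable {n : ℕ} {l : List ℕ}

lemma mem_iff (h : IsPermWord n l) {x : ℕ} : x ∈ l ↔ 1 ≤ x ∧ x ≤ n := by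
  rw [List.Perm.mem_iff h, List.mem_range'_1]; omega

lemma length_eq (h : IsPermWord n l) : l.length = n := by
  simpa using List.Perm.length_eq h

lemma entry_mem_s6 (h : IsPermWord n l) {i : ℕ} (hi : 1 ≤ i) (hin : i ≤ n) : entry l i ∈ l := by
  unfold entry
  rw [List.getD_eq_getElem _ _ (by rw [h.length_eq]; omega)]
  exact List.getElem_mem _

lemma entry_eq_iff (h : IsPermWord n l) {i v : ℕ} (hi : 1 ≤ i) (hin : i ≤ n) (hv : v ∈ l) :
    entry l i = v ↔ i = pos l v := by
  refine ⟨fun hiv => ?_, fun hiv => hiv ▸ entry_pos hv⟩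
  have hlen := h.length_eq
  have hnd : l.Nodup := (List.Perm.nodup_iff h).2 List.nodup_range'
  have hpv := pos_le_length hv
  simp only [entry, pos] at hiv ⊢
  rw [List.getD_eq_getElem _ _ (by omega)] at hiv
  have := hnd.idxOf_getElem (i - 1) (by omega)
  rw [hiv] at this
  omega

lemma erase_max (h : IsPermWord (n + 1) l) : IsPermWord n (l.erase (n + 1)) := by
  have := List.Perm.erase (n + 1) h
  rwa [List.range'_concat, show 1 + 1 * n = n + 1 by omega,
    List.erase_append_right _ (by rw [List.mem_range'_1]; omega), List.erase_cons_head,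
    List.append_nil] at this

lemma erase_min (h : IsPermWord (n + 1) l) : IsPermWord n ((l.erase 1).map (· - 1)) := by
  have := (List.Perm.erase 1 h).map (· - 1)
  rwa [List.range'_succ, List.erase_cons_head, List.map_sub_range' (by omega)] at this

end IsPermWord

namespace IsBaxter

variable {n : ℕ} {l : List ℕ}

lemma erase_max (h : IsBaxter (n + 1) l) : IsBaxter n (l.erase (n + 1)) := by
  obtain ⟨hl, hw⟩ := isBaxter_iff.1 h
  have hmax : n + 1 ∈ l := hl.mem_iff.2 ⟨by omega, le_rfl⟩
  refine ⟨hl.erase_max, (hw.comp_succAbove (p := pos l (n + 1)) (Or.inl ?_)).of_lt_iff ?_⟩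
  · intro k hk hkn hkp
    have hne := mt (hl.entry_eq_iff hk hkn hmax).1 hkp
    have := (hl.mem_iff.1 (hl.entry_mem_s6 hk hkn)).2
    rw [entry_pos hmax]
    omega
  · intro i j hi _ hj _
    rw [entry_erase _ _ hi, entry_erase _ _ hj]
    rfl

lemma erase_min (h : IsBaxter (n + 1) l) : IsBaxter n ((l.erase 1).map (· - 1)) := by
  obtain ⟨hl, hw⟩ := isBaxter_iff.1 h
  have hmin : 1 ∈ l := hl.mem_iff.2 ⟨le_rfl, by omega⟩
  have hgt : ∀ k, 1 ≤ k → k ≤ n + 1 → k ≠ pos l 1 → 1 < entry l k := fun k hk hkn hkp => by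
    have hne := mt (hl.entry_eq_iff hk hkn hmin).1 hkp
    have := (hl.mem_iff.1 (hl.entry_mem_s6 hk hkn)).1
    omega
  refine ⟨hl.erase_min, (hw.comp_succAbove (p := pos l 1) (Or.inr ?_)).of_lt_iff ?_⟩
  · intro k hk hkn hkp
    rw [entry_pos hmin]
    exact hgt k hk hkn hkp
  · intro i j hi hin hj hjn
    have hi' := hgt (succAbove (pos l 1) i) (hi.trans (le_succAbove _ _))
      ((succAbove_le _ _).trans (by omega)) (succAbove_ne _ _)
    have hj' := hgt (succAbove (pos l 1) j) (hj.trans (le_succAbove _ _))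
      ((succAbove_le _ _).trans (by omega)) (succAbove_ne _ _)
    rw [entry_map_sub_one, entry_map_sub_one, entry_erase _ _ hi, entry_erase _ _ hj,
      Function.comp_apply, Function.comp_apply]
    omega

end IsBaxter

lemma HalfFixed.erase_max_erase_min {n : ℕ} {l : List ℕ} (hl : IsPermWord (n + 2) l)
    (hf : HalfFixed (n + 2) l) : HalfFixed n (((l.erase (n + 2)).erase 1).map (· - 1)) := by
  have hmax : n + 2 ∈ l := hl.mem_iff.2 ⟨by omega, le_rfl⟩
  have hmin : 1 ∈ l := hl.mem_iff.2 ⟨le_rfl, by omega⟩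
  have hmin' : 1 ∈ l.erase (n + 2) := hl.erase_max.mem_iff.2 ⟨le_rfl, by omega⟩
  have hp : pos l (n + 2) ≤ n + 2 := hl.length_eq ▸ pos_le_length (v := n + 2) hmax
  have hq : pos (l.erase (n + 2)) 1 ≤ n + 1 :=
    hl.erase_max.length_eq ▸ pos_le_length (v := 1) hmin'
  have hentry : ∀ i, 1 ≤ i → entry (((l.erase (n + 2)).erase 1).map (· - 1)) i =
      entry l (succAbove (pos l (n + 2)) (succAbove (pos (l.erase (n + 2)) 1) i)) - 1 := by
    intro i hi
    rw [entry_map_sub_one, entry_erase _ _ hi,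
      entry_erase _ _ (hi.trans (le_succAbove _ _))]
  have hmirror : succAbove (pos l (n + 2)) (pos (l.erase (n + 2)) 1) = n + 3 - pos l (n + 2) := by
    have h₁ : entry l (succAbove (pos l (n + 2)) (pos (l.erase (n + 2)) 1)) = 1 := by
      rw [← entry_erase _ _ (one_le_pos _ _), entry_pos hmin']
    have h₂ : entry l (n + 3 - pos l (n + 2)) = 1 := by
      rw [hf _ (one_le_pos _ _) hp, entry_pos hmax]
      omega
    have := one_le_pos (l.erase (n + 2)) 1
    have := one_le_pos l (n + 2)
    have := succAbove_le (pos l (n + 2)) (pos (l.erase (n + 2)) 1)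
    rw [hl.entry_eq_iff ((one_le_pos _ _).trans (le_succAbove _ _)) (by omega) hmin] at h₁
    rw [hl.entry_eq_iff (by omega) (by omega) hmin] at h₂
    rw [h₁, h₂]
  generalize pos l (n + 2) = p at *
  generalize pos (l.erase (n + 2)) 1 = q at *
  intro i hi hin
  have hbound : 1 ≤ succAbove p (succAbove q i) ∧ succAbove p (succAbove q i) ≤ n + 2 := by
    unfold succAbove at hmirror ⊢
    split_ifs at hmirror ⊢ <;> omega
  have hsym : succAbove p (succAbove q (n + 1 - i)) = n + 3 - succAbove p (succAbove q i) := by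
    unfold succAbove at hmirror ⊢
    split_ifs at hmirror ⊢ <;> omega
  rw [hentry _ (by omega), hentry _ hi, hsym, hf _ hbound.1 hbound.2]
  have := (hl.mem_iff.1 (hl.entry_mem_s6 hbound.1 hbound.2)).1
  omega

/-- Deleting the entries with values `n+2` and `1` from a Baxter permutation of
length `n+2` fixed under half-turn rotation, and subtracting `1` from each remaining entry,
yields a Baxter permutation of length `n` fixed under half-turn rotation. -/
theorem halfFixed_baxter_core (n : ℕ) (l' : List ℕ)
    (hb : IsBaxter (n + 2) l') (hf : HalfFixed (n + 2) l') :
    IsBaxter n (((l'.erase (n + 2)).erase 1).map (· - 1)) ∧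
      HalfFixed n (((l'.erase (n + 2)).erase 1).map (· - 1)) :=
  ⟨hb.erase_max.erase_min, hf.erase_max_erase_min hb.1⟩
end

section
/- If a permutation of length n is fixed under quarter-turn (90°) rotation of its permutation matrix, then n ≡ 0 (mod 4) or n ≡ 1 (mod 4). -/
/-! Writing `e` for `entry l`, quarter-turn invariance says that `e ∘ e` is the reversal
`i ↦ n + 1 - i` of `{1,…,n}`. Hence `e⁴ = id`, and every point not fixed by `e²` — all points
except the middle one when `n` is odd — lies in an orbit of `e` of size exactly 4. -/

open Finset

section IterateFour

variable {α : Type*} [DecidableEq α] {f : α → α}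

lemma mapsTo_orbit_of_iterate_four {a : α} (ha : f^[4] a = a) :
    Set.MapsTo f ({a, f a, f^[2] a, f^[3] a} : Finset α)
      ({a, f a, f^[2] a, f^[3] a} : Finset α) := by
  intro x hx
  simp only [coe_insert, coe_singleton, Set.mem_insert_iff, Set.mem_singleton_iff] at hx ⊢
  rcases hx with rfl | rfl | rfl | rfl <;> simp_all

theorem four_dvd_card_of_iterate {T : Finset α} (hT : Set.MapsTo f T T)
    (h4 : ∀ x ∈ T, f^[4] x = x) (h2 : ∀ x ∈ T, f^[2] x ≠ x) : 4 ∣ #T := by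
  induction T using Finset.strongInduction with
  | H T ih =>
  obtain rfl | ⟨a, ha⟩ := T.eq_empty_or_nonempty
  · simp
  have h1 : ∀ x ∈ T, f x ≠ x := fun x hx h => h2 x hx (by simp [h])
  have h3 : ∀ x ∈ T, f^[3] x ≠ x := fun x hx h => h1 x hx <|
    calc f x = f (f^[3] x) := by rw [h]
      _ = x := h4 x hx
  set O : Finset α := {a, f a, f^[2] a, f^[3] a}
  have hO : O ⊆ T := by
    simp only [O, insert_subset_iff, singleton_subset_iff]
    exact ⟨ha, hT ha, hT.iterate 2 ha, hT.iterate 3 ha⟩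
  have hcard : #O = 4 := card_eq_four.2 ⟨_, _, _, _, (h1 a ha).symm, (h2 a ha).symm,
    (h3 a ha).symm, (h1 _ (hT ha)).symm, (h2 _ (hT ha)).symm, (h1 _ (hT.iterate 2 ha)).symm, rfl⟩
  have hrest : Set.MapsTo f ↑(T \ O) ↑(T \ O) := by
    intro x hx
    simp only [coe_sdiff, Set.mem_sdiff, mem_coe] at hx ⊢
    refine ⟨hT hx.1, fun hfx => hx.2 ?_⟩
    -- `O` is closed under `f`, and `x = f^[3] (f x)`
    have hx_orbit := ((mapsTo_orbit_of_iterate_four (h4 a ha)).iterate 3) hfx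
    rwa [← Function.iterate_succ_apply, h4 x hx.1] at hx_orbit
  have hdvd := ih _ (sdiff_ssubset hO ⟨a, by simp [O]⟩) hrest
    (fun x hx => h4 x (mem_sdiff.1 hx).1) (fun x hx => h2 x (mem_sdiff.1 hx).1)
  rw [card_sdiff_of_subset hO, hcard] at hdvd
  have := card_le_card hO
  omega

theorem four_dvd_card_filter_iterate_two_ne {S : Finset α} (hS : Set.MapsTo f S S)
    (h4 : ∀ x ∈ S, f^[4] x = x) : 4 ∣ #{x ∈ S | f^[2] x ≠ x} := by
  refine four_dvd_card_of_iterate (fun x hx => ?_) (fun x hx => h4 x (mem_filter.1 hx).1)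
    (fun x hx => (mem_filter.1 hx).2)
  obtain ⟨hxS, hx2⟩ := mem_filter.1 hx
  refine mem_coe.2 (mem_filter.2 ⟨hS hxS, fun hfx => hx2 ?_⟩)
  calc f^[2] x = f (f^[2] (f x)) := by rw [hfx]; rfl
    _ = x := h4 x hxS

end IterateFour

lemma IsPermWord.entry_mem_Icc {n : ℕ} {l : List ℕ} (hl : IsPermWord n l) {i : ℕ}
    (hi : i ∈ Icc 1 n) : entry l i ∈ Icc 1 n := by
  rw [mem_Icc] at hi
  have hlt : i - 1 < l.length := by simp only [hl.length_eq, List.length_range']; omega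
  have hmem : entry l i ∈ l := by
    rw [entry, List.getD_eq_getElem l 0 hlt]
    exact List.getElem_mem hlt
  simpa [mem_Icc, List.mem_range'_1, Nat.lt_succ_iff, add_comm] using hl.mem_iff.1 hmem

section QuarterFixed
variable {n : ℕ} {l : List ℕ}

lemma QuarterFixed.iterate_two (hf : QuarterFixed n l) {i : ℕ} (hi : i ∈ Icc 1 n) :
    (entry l)^[2] i = n + 1 - i :=
  hf i (mem_Icc.1 hi).1 (mem_Icc.1 hi).2

lemma QuarterFixed.iterate_four (hf : QuarterFixed n l) {i : ℕ} (hi : i ∈ Icc 1 n) :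
    (entry l)^[4] i = i := by
  have hi' : (entry l)^[2] i ∈ Icc 1 n := by
    rw [hf.iterate_two hi]; simp only [mem_Icc] at hi ⊢; omega
  rw [Function.iterate_add_apply (m := 2) (n := 2), hf.iterate_two hi', hf.iterate_two hi]
  simp only [mem_Icc] at hi; omega

end QuarterFixed

/-- If a permutation of length `n` is fixed under quarter-turn rotation of its
permutation matrix, then `n ≡ 0` or `1 (mod 4)`. -/
theorem quarterFixed_length_mod_four (n : ℕ) (l : List ℕ)
    (hl : IsPermWord n l) (hf : QuarterFixed n l) :
    n % 4 = 0 ∨ n % 4 = 1 := by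
  have hdvd := four_dvd_card_filter_iterate_two_ne (f := entry l)
    (fun i hi => hl.entry_mem_Icc hi) (fun i hi => hf.iterate_four hi)
  have hcenter : #{i ∈ Icc 1 n | ¬(entry l)^[2] i ≠ i} ≤ 1 := by
    refine card_le_one.2 fun i hi j hj => ?_
    simp only [mem_filter, not_not] at hi hj
    have hi' := hf.iterate_two hi.1
    have hj' := hf.iterate_two hj.1
    omega
  have hsplit := card_filter_add_card_filter_not (s := Icc 1 n) (fun i => (entry l)^[2] i ≠ i)
  rw [Nat.card_Icc] at hsplit
  omega
end
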